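/- arXiv:2408.12556 — 3 statements merged into one kernel-verified Lean document; each statement's English description precedes it below -/
import Mathlib

section
/- Let (B, |·|) be a Banach space, B₀ ⊆ B a dense subspace that is itself Banach with norm |·|₀ satisfying |x| ≤ C|x|₀ for all x ∈ B₀. Let A : B → B be a compact bounded linear operator with A(B₀) ⊆ B₀ such that A₀ := A|_{B₀} is compact and bounded on (B₀, |·|₀). Then the spectral radius of A on B equals the spectral radius of A₀ on B₀. -/
/-!
Every nonzero point of the spectrum of the compact operator `A₀` is an eigenvalue (Fredholm
alternative), and `ι` maps its eigenvectors to eigenvectors of `A`; hence `r(A₀) ≤ r(A)`.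

Conversely, `A` maps the unit ball into a compact set, which is covered by finitely many
`δ`-balls centred in the dense subspace `ι B₀`. So for a unit vector `v` there is `x` with
`‖x‖₀ ≤ M` and `‖A v - ι x‖ ≤ δ`, and `A^(n+1) v = ι (A₀ⁿ x) + Aⁿ (A v - ι x)` gives
`‖A^(n+1)‖ ≤ ‖ι‖ M ‖A₀ⁿ‖ + δ ‖Aⁿ‖`. For `t > r(A₀)` Gelfand's formula gives `‖A₀ⁿ‖ ≤ tⁿ`
eventually, and with `δ = t / 2` the recursion yields `‖Aⁿ‖ = O(tⁿ)`, so `r(A) ≤ t`.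
-/

open Filter Topology Function
open scoped NNReal ENNReal

theorem exists_eventually_le_mul_pow_of_succ_le {u : ℕ → ℝ} {D t : ℝ} (ht : 0 < t)
    (h : ∀ᶠ n in atTop, u (n + 1) ≤ D * t ^ n + t / 2 * u n) :
    ∃ K, ∀ᶠ n in atTop, u n ≤ K * t ^ n := by
  obtain ⟨N, hN⟩ := eventually_atTop.1 h
  set K := max (u N / t ^ N) (2 * D / t)
  refine ⟨K, eventually_atTop.2 ⟨N, fun n hn => ?_⟩⟩
  induction n, hn using Nat.le_induction with
  | base => rw [← div_le_iff₀ (by positivity)]; exact le_max_left _ _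
  | succ n hn ih =>
    have hD : D ≤ K * t / 2 := by
      have := le_max_right (u N / t ^ N) (2 * D / t)
      rw [div_le_iff₀ ht] at this
      linarith
    calc u (n + 1) ≤ D * t ^ n + t / 2 * (K * t ^ n) := (hN n hn).trans (by gcongr)
      _ ≤ K * t / 2 * t ^ n + t / 2 * (K * t ^ n) := by gcongr
      _ = K * t ^ (n + 1) := by ring

namespace spectrum

theorem spectralRadius_le_of_forall_mem {𝕜 𝔸 𝔹 : Type*} [NormedField 𝕜] [Ring 𝔸] [Algebra 𝕜 𝔸]
    [Ring 𝔹] [Algebra 𝕜 𝔹] {a : 𝔸} {b : 𝔹} (h : ∀ μ ∈ spectrum 𝕜 a, μ ≠ 0 → μ ∈ spectrum 𝕜 b) :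
    spectralRadius 𝕜 a ≤ spectralRadius 𝕜 b := by
  refine iSup₂_le fun μ hμ => ?_
  rcases eq_or_ne μ 0 with rfl | hμ0
  · simp
  · exact le_iSup₂ (f := fun μ (_ : μ ∈ spectrum 𝕜 b) => (‖μ‖₊ : ℝ≥0∞)) μ (h μ hμ hμ0)

section NormedField

variable {𝕜 𝔸 : Type*} [NormedField 𝕜] [NormedRing 𝔸] [NormedAlgebra 𝕜 𝔸] [CompleteSpace 𝔸]

theorem spectralRadius_le_of_eventually_norm_pow_le (a : 𝔸) {t : ℝ≥0}
    (h : ∀ᶠ n in atTop, ‖a ^ n‖ ≤ t ^ n) : spectralRadius 𝕜 a ≤ t := by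
  refine (spectralRadius_le_liminf_pow_nnnorm_pow_one_div 𝕜 a).trans
    (liminf_le_of_frequently_le' (Eventually.frequently ?_))
  filter_upwards [h, eventually_gt_atTop 0] with n hn hn0
  rw [one_div, ENNReal.rpow_inv_le_iff (by positivity), ENNReal.rpow_natCast]
  exact_mod_cast hn

theorem spectralRadius_le_of_eventually_norm_pow_le_mul (a : 𝔸) {t : ℝ≥0} {K : ℝ}
    (h : ∀ᶠ n in atTop, ‖a ^ n‖ ≤ K * t ^ n) : spectralRadius 𝕜 a ≤ t := by
  refine ENNReal.le_of_forall_pos_le_add fun ε hε _ => ?_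
  have hts : (t : ℝ) < t + ε := by simpa using hε
  have hq : Tendsto (fun n : ℕ => K * (t / (t + ε) : ℝ) ^ n) atTop (𝓝 0) := by
    simpa using (tendsto_pow_atTop_nhds_zero_of_lt_one (by positivity)
      ((div_lt_one (by positivity)).2 hts)).const_mul K
  refine mod_cast spectralRadius_le_of_eventually_norm_pow_le a ?_
  filter_upwards [h, hq.eventually_le_const zero_lt_one] with n hn hqn
  calc ‖a ^ n‖ ≤ K * t ^ n := hn
    _ = K * (t / (t + ε) : ℝ) ^ n * (t + ε : ℝ) ^ n := by
        rw [div_pow, mul_assoc, div_mul_cancel₀ _ (by positivity)]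
    _ ≤ ((t + ε : ℝ≥0) : ℝ) ^ n := by
        push_cast
        exact mul_le_of_le_one_left (by positivity) hqn

end NormedField

variable {𝔸 : Type*} [NormedRing 𝔸] [NormedAlgebra ℂ 𝔸] [CompleteSpace 𝔸]

theorem eventually_norm_pow_le_of_spectralRadius_lt (a : 𝔸) {t : ℝ≥0}
    (h : spectralRadius ℂ a < t) : ∀ᶠ n in atTop, ‖a ^ n‖ ≤ t ^ n := by
  filter_upwards [(pow_nnnorm_pow_one_div_tendsto_nhds_spectralRadius a).eventually_lt_const h,
    eventually_gt_atTop 0] with n hn hn0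
  rw [one_div, ENNReal.rpow_inv_lt_iff (by positivity), ENNReal.rpow_natCast] at hn
  exact_mod_cast hn.le

theorem spectralRadius_le_of_norm_pow_succ_le {𝔹 : Type*} [NormedRing 𝔹] [NormedAlgebra ℂ 𝔹]
    [CompleteSpace 𝔹] (a : 𝔸) (b : 𝔹)
    (h : ∀ δ > 0, ∃ D ≥ 0, ∀ n, ‖a ^ (n + 1)‖ ≤ D * ‖b ^ n‖ + δ * ‖a ^ n‖) :
    spectralRadius ℂ a ≤ spectralRadius ℂ b := by
  refine le_of_forall_gt_imp_ge_of_dense fun c hc => ?_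
  induction c using ENNReal.recTopCoe with
  | top => exact le_top
  | coe t =>
    have ht : (0 : ℝ) < t := mod_cast (zero_le : 0 ≤ spectralRadius ℂ b).trans_lt hc
    obtain ⟨D, hD, hrec⟩ := h (t / 2) (by positivity)
    obtain ⟨K, hK⟩ := exists_eventually_le_mul_pow_of_succ_le (u := fun n => ‖a ^ n‖) ht <| by
      filter_upwards [eventually_norm_pow_le_of_spectralRadius_lt b hc] with n hn
      exact (hrec n).trans (by gcongr)
    exact spectralRadius_le_of_eventually_norm_pow_le_mul a hK

end spectrum

theorem IsCompact.exists_norm_le_dist_lt_of_denseRange {X E : Type*} [PseudoMetricSpace X]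
    [SeminormedAddGroup E] {K : Set X} (hK : IsCompact K) {f : E → X} (hf : DenseRange f)
    {δ : ℝ} (hδ : 0 < δ) : ∃ M ≥ 0, ∀ y ∈ K, ∃ x, ‖x‖ ≤ M ∧ dist y (f x) < δ := by
  obtain ⟨s, hs⟩ := hK.elim_finite_subcover (fun x => Metric.ball (f x) δ)
    (fun _ => Metric.isOpen_ball) fun y _ => Set.mem_iUnion.2 (hf.exists_dist_lt y hδ)
  refine ⟨(s.sup (‖·‖₊) : ℝ≥0), NNReal.coe_nonneg _, fun y hy => ?_⟩
  obtain ⟨x, hxs, hx⟩ := Set.mem_iUnion₂.1 (hs hy)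
  exact ⟨x, mod_cast s.le_sup (f := (‖·‖₊)) hxs, hx⟩

namespace IsCompactOperator

theorem exists_norm_pow_succ_le_of_denseRange {𝕜 E F : Type*} [RCLike 𝕜]
    [NormedAddCommGroup E] [NormedSpace 𝕜 E] [NormedAddCommGroup F] [NormedSpace 𝕜 F]
    {ι : E →L[𝕜] F} (hι : DenseRange ι) {A : F →L[𝕜] F} {A₀ : E →L[𝕜] E}
    (hA : IsCompactOperator A) (hcomm : Semiconj ι A₀ A) {δ : ℝ} (hδ : 0 < δ) :
    ∃ D ≥ 0, ∀ n, ‖A ^ (n + 1)‖ ≤ D * ‖A₀ ^ n‖ + δ * ‖A ^ n‖ := by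
  obtain ⟨M, hM, happrox⟩ :=
    (hA.isCompact_closure_image_closedBall 1).exists_norm_le_dist_lt_of_denseRange hι hδ
  refine ⟨‖ι‖ * M, by positivity, fun n => ContinuousLinearMap.opNorm_le_of_unit_norm
    (by positivity) fun v hv => ?_⟩
  obtain ⟨x, hxM, hx⟩ := happrox (A v) (subset_closure ⟨v, by simp [hv], rfl⟩)
  rw [dist_eq_norm] at hx
  have hsplit : (A ^ (n + 1)) v = ι ((A₀ ^ n) x) + (A ^ n) (A v - ι x) := by
    rw [pow_succ, mul_apply_eq_comp, map_sub, FunLike.coe_pow_eq_iterate A,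
      FunLike.coe_pow_eq_iterate A₀, ← hcomm.iterate_right n x]
    abel
  calc ‖(A ^ (n + 1)) v‖
      ≤ ‖ι‖ * (‖A₀ ^ n‖ * ‖x‖) + ‖A ^ n‖ * ‖A v - ι x‖ := hsplit ▸
        norm_add_le_of_le (ι.le_opNorm_of_le ((A₀ ^ n).le_opNorm x)) ((A ^ n).le_opNorm _)
    _ ≤ ‖ι‖ * (‖A₀ ^ n‖ * M) + ‖A ^ n‖ * δ := by gcongr
    _ = ‖ι‖ * M * ‖A₀ ^ n‖ + δ * ‖A ^ n‖ := by ring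

theorem mem_spectrum_of_semiconj {𝕜 E F : Type*} [NontriviallyNormedField 𝕜]
    [NormedAddCommGroup E] [NormedSpace 𝕜 E] [NormedAddCommGroup F] [NormedSpace 𝕜 F]
    [CompleteSpace E] [CompleteSpace F] {ι : E →ₗ[𝕜] F} (hι : Injective ι) {A₀ : E →L[𝕜] E}
    {A : F →L[𝕜] F} (hA₀ : IsCompactOperator A₀) (hcomm : Semiconj ι A₀ A) {μ : 𝕜}
    (hμ : μ ∈ spectrum 𝕜 A₀) (hμ0 : μ ≠ 0) : μ ∈ spectrum 𝕜 A := by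
  obtain ⟨v, hv⟩ := ((hA₀.hasEigenvalue_iff_mem_spectrum hμ0).2 hμ).exists_hasEigenvector
  rw [ContinuousLinearMap.spectrum_eq]
  refine (Module.End.hasEigenvalue_of_hasEigenvector (x := ι v) ⟨?_, ?_⟩).mem_spectrum
  · rw [Module.End.mem_eigenspace_iff]
    change A (ι v) = μ • ι v
    rw [← hcomm v, ← map_smul]
    exact congrArg ι hv.apply_eq_smul
  · exact (map_ne_zero_iff ι hι).2 hv.2

end IsCompactOperator

theorem stmt3_general {B B₀ : Type*} [NormedAddCommGroup B] [NormedSpace ℂ B] [CompleteSpace B]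
    [NormedAddCommGroup B₀] [NormedSpace ℂ B₀] [CompleteSpace B₀]
    (ι : B₀ →ₗ[ℂ] B) (hinj : Function.Injective ι) (hdense : DenseRange ι)
    (C : ℝ) (hbound : ∀ x : B₀, ‖ι x‖ ≤ C * ‖x‖)
    (A : B →L[ℂ] B) (A₀ : B₀ →L[ℂ] B₀)
    (hAcomp : IsCompactOperator (⇑A)) (hA₀comp : IsCompactOperator (⇑A₀))
    (hcomm : ∀ x : B₀, A (ι x) = ι (A₀ x)) :
    spectralRadius ℂ A = spectralRadius ℂ A₀ := by
  have hsemiconj : Semiconj ι A₀ A := fun x => (hcomm x).symm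
  refine le_antisymm ?_ ?_
  · exact spectrum.spectralRadius_le_of_norm_pow_succ_le A A₀ fun δ hδ =>
      hAcomp.exists_norm_pow_succ_le_of_denseRange (ι := ι.mkContinuous C hbound) hdense
        hsemiconj hδ
  · exact spectrum.spectralRadius_le_of_forall_mem fun μ hμ hμ0 =>
      hA₀comp.mem_spectrum_of_semiconj hinj hsemiconj hμ hμ0

/-- If a compact bounded operator `A` on a Banach space `B` restricts (through a dense
continuous embedding `ι : B₀ → B`) to a compact bounded operator `A₀` on a Banach space
`B₀`, then the spectral radii agree. -/
theorem stmt3 {B B₀ : Type*} [NormedAddCommGroup B] [NormedSpace ℂ B] [CompleteSpace B]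
    [NormedAddCommGroup B₀] [NormedSpace ℂ B₀] [CompleteSpace B₀]
    (ι : B₀ →ₗ[ℂ] B) (hinj : Function.Injective ι) (hdense : DenseRange ι)
    (C : ℝ) (hC : 0 < C) (hbound : ∀ x : B₀, ‖ι x‖ ≤ C * ‖x‖)
    (A : B →L[ℂ] B) (A₀ : B₀ →L[ℂ] B₀)
    (hAcomp : IsCompactOperator (⇑A)) (hA₀comp : IsCompactOperator (⇑A₀))
    (hcomm : ∀ x : B₀, A (ι x) = ι (A₀ x)) :
    spectralRadius ℂ A = spectralRadius ℂ A₀ :=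
  stmt3_general ι hinj hdense C hbound A A₀ hAcomp hA₀comp hcomm
end

section
/- For η > 1 and x ∈ [0,1], define δ[x,η] = (η+η⁻¹)/2 − x if x > 2/(η+η⁻¹), and δ[x,η] = ((η−η⁻¹)/2)·√(1−x²) otherwise. Then the closed ball in ℂ of center x and radius δ[x,η] is contained in the closed Bernstein ellipse Ē_η = { z ∈ ℂ : |z−1| + |z+1| ≤ η + η⁻¹ }. -/
/-!
With `a = (η + η⁻¹)/2` one has `((η - η⁻¹)/2)² = a² - 1`, so `Ē_η` is the ellipse
`(a² - 1) u² + a² v² ≤ a² (a² - 1)` with foci `±1`; on it the focal radii are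
`|z ∓ 1| ≤ (a² ∓ Re z)/a`, which sum to `2a`. Both disks fit inside this ellipse by a
one-line polynomial identity: for the disk of radius `√(a² - 1) √(1 - x²)` the defect is
`-(Re z - a² x)²`, and for the disk of radius `a - x` it is
`(a - Re z)(Re z + a - 2a² x)`, which is `≤ 0` once `a x ≥ 1`.
-/

/-- The radius `δ[x,η]` of a disk around `x ∈ [0,1]` contained in the closed
Bernstein ellipse of size `η`. -/
noncomputable def bernDelta (η x : ℝ) : ℝ :=
  if x > 2 / (η + η⁻¹) then (η + η⁻¹) / 2 - x else (η - η⁻¹) / 2 * Real.sqrt (1 - x ^ 2)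

theorem Complex.sq_norm_sub_ofReal (z : ℂ) (x : ℝ) :
    ‖z - x‖ ^ 2 = (z.re - x) ^ 2 + z.im ^ 2 := by
  rw [Complex.sq_norm, Complex.normSq_apply]
  simp only [Complex.sub_re, Complex.sub_im, Complex.ofReal_re, Complex.ofReal_im, sub_zero]
  ring

section Ellipse

variable {a : ℝ} {z : ℂ}

theorem norm_sub_one_le_of_ellipse (ha : 1 < a)
    (hz : (a ^ 2 - 1) * z.re ^ 2 + a ^ 2 * z.im ^ 2 ≤ a ^ 2 * (a ^ 2 - 1)) :
    ‖z - 1‖ ≤ (a ^ 2 - z.re) / a := by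
  have ha0 : 0 < a := by linarith
  have hre_sq : z.re ^ 2 ≤ a ^ 2 :=
    le_of_mul_le_mul_left (by nlinarith [sq_nonneg z.im]) (by nlinarith : 0 < a ^ 2 - 1)
  have hre : z.re ≤ a ^ 2 := by nlinarith [le_of_sq_le_sq hre_sq ha0.le]
  have hnorm : ‖z - 1‖ ^ 2 = (z.re - 1) ^ 2 + z.im ^ 2 := by
    simpa using Complex.sq_norm_sub_ofReal z 1
  refine le_of_sq_le_sq ?_ (div_nonneg (by linarith) ha0.le)
  rw [div_pow, le_div_iff₀ (by positivity), hnorm]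
  -- `a² |z - 1|² - (a² - Re z)²` is exactly the ellipse defect
  nlinarith

theorem norm_sub_one_add_norm_add_one_le_of_ellipse (ha : 1 < a)
    (hz : (a ^ 2 - 1) * z.re ^ 2 + a ^ 2 * z.im ^ 2 ≤ a ^ 2 * (a ^ 2 - 1)) :
    ‖z - 1‖ + ‖z + 1‖ ≤ 2 * a := by
  have h₁ := norm_sub_one_le_of_ellipse ha hz
  have h₂ := norm_sub_one_le_of_ellipse (z := -z) ha (by simpa using hz)
  rw [← neg_add', norm_neg, Complex.neg_re] at h₂
  calc ‖z - 1‖ + ‖z + 1‖ ≤ (a ^ 2 - z.re) / a + (a ^ 2 - -z.re) / a := add_le_add h₁ h₂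
    _ = 2 * a := by field_simp; ring

theorem ellipse_of_norm_sub_ofReal_le_sub {x : ℝ} (ha : 0 < a) (hax : 1 ≤ a * x)
    (hz : ‖z - x‖ ≤ a - x) :
    (a ^ 2 - 1) * z.re ^ 2 + a ^ 2 * z.im ^ 2 ≤ a ^ 2 * (a ^ 2 - 1) := by
  have hxa : 0 ≤ a - x := (norm_nonneg _).trans hz
  have hdisk : (z.re - x) ^ 2 + z.im ^ 2 ≤ (a - x) ^ 2 := by
    rw [← Complex.sq_norm_sub_ofReal]; gcongr
  have hre : z.re ≤ a := by nlinarith [sq_nonneg z.im]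
  nlinarith [mul_nonneg (sub_nonneg.2 hre) (by nlinarith : 0 ≤ 2 * a ^ 2 * x - a - z.re)]

theorem ellipse_of_sq_norm_sub_ofReal_le {x : ℝ}
    (hz : ‖z - x‖ ^ 2 ≤ (a ^ 2 - 1) * (1 - x ^ 2)) :
    (a ^ 2 - 1) * z.re ^ 2 + a ^ 2 * z.im ^ 2 ≤ a ^ 2 * (a ^ 2 - 1) := by
  rw [Complex.sq_norm_sub_ofReal] at hz
  nlinarith [sq_nonneg (z.re - a ^ 2 * x)]

end Ellipse

/-- The closed ball in `ℂ` of center `x ∈ [0,1]` and radius `δ[x,η]` is contained in the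
closed Bernstein ellipse `{z : |z−1| + |z+1| ≤ η + η⁻¹}`. -/
theorem stmt16 (η : ℝ) (hη : 1 < η) (x : ℝ) (hx : x ∈ Set.Icc (0 : ℝ) 1) :
    ∀ z : ℂ, ‖z - (x : ℂ)‖ ≤ bernDelta η x →
      ‖z - 1‖ + ‖z + 1‖ ≤ η + η⁻¹ := by
  intro z hz
  set a := (η + η⁻¹) / 2 with ha_def
  have hη₀ : 0 < η := by linarith
  have hηinv : η * η⁻¹ = 1 := mul_inv_cancel₀ hη₀.ne'
  have ha : 1 < a := by nlinarith [inv_lt_one_of_one_lt₀ hη]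
  have hb : ((η - η⁻¹) / 2) ^ 2 = a ^ 2 - 1 := by
    rw [ha_def]; linear_combination -hηinv
  have hellipse : (a ^ 2 - 1) * z.re ^ 2 + a ^ 2 * z.im ^ 2 ≤ a ^ 2 * (a ^ 2 - 1) := by
    unfold bernDelta at hz
    split_ifs at hz with hcase
    · refine ellipse_of_norm_sub_ofReal_le_sub (by linarith) ?_ hz
      rw [gt_iff_lt, div_lt_iff₀ (by positivity)] at hcase
      linarith [show a * x = x * (η + η⁻¹) / 2 by ring]
    · refine ellipse_of_sq_norm_sub_ofReal_le (x := x) ?_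
      have hx1 : 0 ≤ 1 - x ^ 2 := by nlinarith [hx.1, hx.2]
      calc ‖z - x‖ ^ 2 ≤ ((η - η⁻¹) / 2 * √(1 - x ^ 2)) ^ 2 :=
            pow_le_pow_left₀ (norm_nonneg _) hz 2
        _ = (a ^ 2 - 1) * (1 - x ^ 2) := by rw [mul_pow, hb, Real.sq_sqrt hx1]
  linarith [norm_sub_one_add_norm_add_one_le_of_ellipse ha hellipse]
end

section
/- Let F : X → X be a map on a Banach space, X̄ ∈ X, and A : X → X a bounded injective linear operator. Suppose Y, Z₁, Z₂ ≥ 0 satisfy ‖AF(X̄)‖ ≤ Y, ‖I − AF'(X̄)‖ ≤ Z₁, and ‖A(F'(X) − F'(X̄))‖ ≤ Z₂‖X − X̄‖ for all X ∈ X, where F is Fréchet differentiable. If Z₁ < 1 and 2YZ₂ < (1−Z₁)², then for every r with (1 − Z₁ − √((1−Z₁)² − 2YZ₂))/Z₂ ≤ r < (1−Z₁)/Z₂, there exists a unique zero X* of F with ‖X* − X̄‖ ≤ r. -/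
/-!
`X` is a zero of `F` exactly when it is a fixed point of the Newton-like map
`T X = X - A F(X)`, because `A` is injective. Since `DT = I - A DF`, the bounds give
`‖DT(z)‖ ≤ Z₁ + Z₂ ‖z - X̄‖`. Integrating this along the segment from `X̄` gives
`‖T X - T X̄‖ ≤ Z₁ d + Z₂ d² / 2` with `d = ‖X - X̄‖`, hence `‖T X - X̄‖ ≤ Y + Z₁ r + Z₂ r² / 2`
on the closed ball of radius `r`, and the mean value inequality makes `T` Lipschitz there
with constant `Z₁ + Z₂ r`. The two conditions on `r` say exactly that `r` lies between the smaller root of the radii polynomial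
`Z₂ r² / 2 - (1 - Z₁) r + Y` and its critical point `(1 - Z₁) / Z₂`, so `T` is a contraction
of the ball into itself and Banach's fixed point theorem applies.
-/

open Function Metric Set

theorem exists_unique_isFixedPt_of_lipschitzOnWith {α : Type*} [MetricSpace α] {f : α → α}
    {s : Set α} {K : NNReal} (hsc : IsComplete s) (hne : s.Nonempty) (hmaps : MapsTo f s s)
    (hK : K < 1) (hf : LipschitzOnWith K f s) : ∃! x, IsFixedPt f x ∧ x ∈ s := by
  have hcontr : ContractingWith K (hmaps.restrict f s s) := ⟨hK, hf.mapsToRestrict hmaps⟩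
  obtain ⟨x₀, hx₀⟩ := hne
  obtain ⟨x, hxs, hfix, -⟩ := hcontr.exists_fixedPoint' hsc hmaps hx₀ (edist_ne_top _ _)
  refine ⟨x, ⟨hfix, hxs⟩, fun y ⟨hfix', hys⟩ => ?_⟩
  exact congrArg Subtype.val
    (hcontr.fixedPoint_unique' (x := ⟨y, hys⟩) (y := ⟨x, hxs⟩) (Subtype.ext hfix')
      (Subtype.ext hfix))

section QuadraticEstimate

variable {E G : Type*} [NormedAddCommGroup E] [NormedSpace ℝ E]
  [NormedAddCommGroup G] [NormedSpace ℝ G]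

theorem norm_sub_le_of_norm_fderiv_le_affine {f : E → G} {f' : E → E →L[ℝ] G}
    (hf : ∀ z, HasFDerivAt f (f' z) z) {x₀ : E} {a b : ℝ}
    (hbound : ∀ z, ‖f' z‖ ≤ a + b * ‖z - x₀‖) (x : E) :
    ‖f x - f x₀‖ ≤ a * ‖x - x₀‖ + b / 2 * ‖x - x₀‖ ^ 2 := by
  set v := x - x₀
  set d := ‖v‖
  have hpath : ∀ t : ℝ, HasDerivAt (fun t : ℝ => x₀ + t • v) v t := fun t => by
    simpa using ((hasDerivAt_id t).smul_const v).const_add x₀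
  have hg : ∀ t : ℝ, HasDerivAt (fun t => f (x₀ + t • v) - f x₀) (f' (x₀ + t • v) v) t :=
    fun t => ((hf _).comp_hasDerivAt t (hpath t)).sub_const _
  have hB : ∀ t : ℝ, HasDerivAt (fun t => a * d * t + b / 2 * d ^ 2 * t ^ 2)
      (a * d + b * d ^ 2 * t) t := fun t => by
    refine (((hasDerivAt_id t).const_mul (a * d)).add
      ((hasDerivAt_pow 2 t).const_mul (b / 2 * d ^ 2))).congr_deriv ?_
    ring
  have hg' : ∀ t ∈ Ico (0 : ℝ) 1, ‖f' (x₀ + t • v) v‖ ≤ a * d + b * d ^ 2 * t := by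
    rintro t ⟨ht, -⟩
    have hdist : ‖x₀ + t • v - x₀‖ = t * d := by
      rw [add_sub_cancel_left, norm_smul, Real.norm_of_nonneg ht]
    calc ‖f' (x₀ + t • v) v‖ ≤ ‖f' (x₀ + t • v)‖ * d := (f' _).le_opNorm v
      _ ≤ (a + b * (t * d)) * d := by grw [hbound, hdist]
      _ = a * d + b * d ^ 2 * t := by ring
  have key := image_norm_le_of_norm_deriv_right_le_deriv_boundary
    (fun t _ => (hg t).continuousAt.continuousWithinAt) (fun t _ => (hg t).hasDerivWithinAt)
    (by simp) hB hg' (right_mem_Icc.mpr zero_le_one)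
  simpa [v, d] using key

end QuadraticEstimate

theorem exists_unique_isFixedPt_closedBall_of_radii_bounds {E : Type*} [NormedAddCommGroup E]
    [NormedSpace ℝ E] [CompleteSpace E] {T : E → E} {T' : E → E →L[ℝ] E}
    (hT : ∀ z, HasFDerivAt T (T' z) z) {x₀ : E} {Y Z₁ Z₂ r : ℝ}
    (hY : ‖T x₀ - x₀‖ ≤ Y) (hZ : ∀ z, ‖T' z‖ ≤ Z₁ + Z₂ * ‖z - x₀‖) (hZ₂ : 0 ≤ Z₂)
    (hr : 0 ≤ r) (hpoly : Y + Z₁ * r + Z₂ / 2 * r ^ 2 ≤ r) (hcontr : Z₁ + Z₂ * r < 1) :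
    ∃! x, IsFixedPt T x ∧ x ∈ closedBall x₀ r := by
  have hZ₁ : 0 ≤ Z₁ := by simpa using (norm_nonneg _).trans (hZ x₀)
  have hball : ∀ z ∈ closedBall x₀ r, ‖T' z‖ ≤ Z₁ + Z₂ * r := fun z hz => by
    grw [hZ z, mem_closedBall_iff_norm.1 hz]
  have hlip : LipschitzOnWith ⟨Z₁ + Z₂ * r, by positivity⟩ T (closedBall x₀ r) :=
    (convex_closedBall x₀ r).lipschitzOnWith_of_nnnorm_hasFDerivWithin_le
      (fun z _ => (hT z).hasFDerivWithinAt) hball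
  have hmaps : MapsTo T (closedBall x₀ r) (closedBall x₀ r) := fun x hx => by
    have hd := mem_closedBall_iff_norm.1 hx
    have hquad := norm_sub_le_of_norm_fderiv_le_affine hT hZ x
    rw [mem_closedBall_iff_norm]
    calc ‖T x - x₀‖ ≤ ‖T x - T x₀‖ + ‖T x₀ - x₀‖ := norm_sub_le_norm_sub_add_norm_sub _ _ _
      _ ≤ Z₁ * r + Z₂ / 2 * r ^ 2 + Y := by grw [hquad, hY, hd]
      _ ≤ r := by linarith
  exact exists_unique_isFixedPt_of_lipschitzOnWith isClosed_closedBall.isComplete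
    (nonempty_closedBall.2 hr) hmaps (by exact_mod_cast hcontr) hlip

section NewtonLike

variable {X : Type*} [NormedAddCommGroup X] [NormedSpace ℝ X]

def newtonLike (A : X →L[ℝ] X) (F : X → X) (x : X) : X := x - A (F x)

theorem hasFDerivAt_newtonLike {A : X →L[ℝ] X} {F : X → X} {DF : X →L[ℝ] X} {x : X}
    (hF : HasFDerivAt F DF x) :
    HasFDerivAt (newtonLike A F) (ContinuousLinearMap.id ℝ X - A.comp DF) x :=
  (hasFDerivAt_id x).sub (A.hasFDerivAt.comp x hF)

theorem isFixedPt_newtonLike_iff {A : X →L[ℝ] X} (hA : Injective A) {F : X → X} {x : X} :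
    IsFixedPt (newtonLike A F) x ↔ F x = 0 := by
  rw [IsFixedPt, newtonLike, sub_eq_self, map_eq_zero_iff A hA]

end NewtonLike

theorem radii_bounds_of_le_of_lt {Y Z₁ Z₂ r : ℝ} (hY : 0 ≤ Y) (hZ₁ : Z₁ < 1)
    (hdisc : 2 * Y * Z₂ < (1 - Z₁) ^ 2)
    (hr₁ : (1 - Z₁ - Real.sqrt ((1 - Z₁) ^ 2 - 2 * Y * Z₂)) / Z₂ ≤ r)
    (hr₂ : r < (1 - Z₁) / Z₂) :
    0 < Z₂ ∧ 0 ≤ r ∧ Y + Z₁ * r + Z₂ / 2 * r ^ 2 ≤ r ∧ Z₁ + Z₂ * r < 1 := by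
  set s := Real.sqrt ((1 - Z₁) ^ 2 - 2 * Y * Z₂)
  have hs : s ^ 2 = (1 - Z₁) ^ 2 - 2 * Y * Z₂ := Real.sq_sqrt (by linarith)
  have hs₀ : 0 ≤ s := Real.sqrt_nonneg _
  have hZ₂ : 0 < Z₂ := by
    by_contra! hZ₂
    have hupper : (1 - Z₁) / Z₂ ≤ 0 := div_nonpos_of_nonneg_of_nonpos (by linarith) hZ₂
    have hlower : 0 ≤ (1 - Z₁ - s) / Z₂ :=
      div_nonneg_of_nonpos (by nlinarith [mul_nonneg hY (neg_nonneg.2 hZ₂)]) hZ₂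
    linarith
  have hlow : 1 - Z₁ - s ≤ Z₂ * r := by rwa [div_le_iff₀' hZ₂] at hr₁
  have hup : Z₂ * r < 1 - Z₁ := by rwa [lt_div_iff₀' hZ₂] at hr₂
  have hs_le : s ≤ 1 - Z₁ := by nlinarith [mul_nonneg hY hZ₂.le]
  refine ⟨hZ₂, by nlinarith, ?_, by linarith⟩
  -- `Z₂ r` lies between the roots `1 - Z₁ ∓ s` of `u² - 2 (1 - Z₁) u + 2 Y Z₂`
  nlinarith [mul_nonneg (sub_nonneg.2 hlow) (by linarith : 0 ≤ 1 - Z₁ + s - Z₂ * r)]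

theorem stmt17_general {X : Type*} [NormedAddCommGroup X] [NormedSpace ℝ X] [CompleteSpace X]
    (F : X → X) (DF : X → X →L[ℝ] X) (hFderiv : ∀ x : X, HasFDerivAt F (DF x) x)
    (A : X →L[ℝ] X) (hAinj : Function.Injective A)
    (Xbar : X) (Y Z₁ Z₂ : ℝ)
    (hbY : ‖A (F Xbar)‖ ≤ Y)
    (hbZ₁ : ‖ContinuousLinearMap.id ℝ X - A.comp (DF Xbar)‖ ≤ Z₁)
    (hbZ₂ : ∀ x : X, ‖A.comp (DF x - DF Xbar)‖ ≤ Z₂ * ‖x - Xbar‖)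
    (hZ₁lt : Z₁ < 1) (hdisc : 2 * Y * Z₂ < (1 - Z₁) ^ 2) :
    ∀ r : ℝ, (1 - Z₁ - Real.sqrt ((1 - Z₁) ^ 2 - 2 * Y * Z₂)) / Z₂ ≤ r →
      r < (1 - Z₁) / Z₂ →
      ∃! x : X, F x = 0 ∧ ‖x - Xbar‖ ≤ r := by
  intro r hr₁ hr₂
  obtain ⟨hZ₂, hr, hpoly, hcontr⟩ :=
    radii_bounds_of_le_of_lt ((norm_nonneg _).trans hbY) hZ₁lt hdisc hr₁ hr₂
  have hY : ‖newtonLike A F Xbar - Xbar‖ ≤ Y := by simpa [newtonLike] using hbY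
  have hZ : ∀ z, ‖ContinuousLinearMap.id ℝ X - A.comp (DF z)‖ ≤ Z₁ + Z₂ * ‖z - Xbar‖ :=
    fun z => by
      rw [show ContinuousLinearMap.id ℝ X - A.comp (DF z) =
          (ContinuousLinearMap.id ℝ X - A.comp (DF Xbar)) - A.comp (DF z - DF Xbar) by
        rw [ContinuousLinearMap.comp_sub]; abel]
      exact (norm_sub_le _ _).trans (add_le_add hbZ₁ (hbZ₂ z))
  simpa only [isFixedPt_newtonLike_iff hAinj, mem_closedBall_iff_norm] using
    exists_unique_isFixedPt_closedBall_of_radii_bounds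
      (fun z => hasFDerivAt_newtonLike (hFderiv z)) hY hZ hZ₂.le hr hpoly hcontr

/-- Newton–Kantorovich type theorem: under the `Y`, `Z₁`, `Z₂` bounds with `Z₁ < 1` and
`2YZ₂ < (1−Z₁)²`, for every admissible radius `r` there is a unique zero of `F` in the
closed ball of radius `r` around the approximate solution `X̄`. -/
theorem stmt17 {X : Type*} [NormedAddCommGroup X] [NormedSpace ℝ X] [CompleteSpace X]
    (F : X → X) (DF : X → X →L[ℝ] X) (hFderiv : ∀ x : X, HasFDerivAt F (DF x) x)
    (A : X →L[ℝ] X) (hAinj : Function.Injective A)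
    (Xbar : X) (Y Z₁ Z₂ : ℝ) (hY : 0 ≤ Y) (hZ₁ : 0 ≤ Z₁) (hZ₂ : 0 ≤ Z₂)
    (hbY : ‖A (F Xbar)‖ ≤ Y)
    (hbZ₁ : ‖ContinuousLinearMap.id ℝ X - A.comp (DF Xbar)‖ ≤ Z₁)
    (hbZ₂ : ∀ x : X, ‖A.comp (DF x - DF Xbar)‖ ≤ Z₂ * ‖x - Xbar‖)
    (hZ₁lt : Z₁ < 1) (hdisc : 2 * Y * Z₂ < (1 - Z₁) ^ 2) :
    ∀ r : ℝ, (1 - Z₁ - Real.sqrt ((1 - Z₁) ^ 2 - 2 * Y * Z₂)) / Z₂ ≤ r →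
      r < (1 - Z₁) / Z₂ →
      ∃! x : X, F x = 0 ∧ ‖x - Xbar‖ ≤ r :=
  stmt17_general F DF hFderiv A hAinj Xbar Y Z₁ Z₂ hbY hbZ₁ hbZ₂ hZ₁lt hdisc
end
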